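/- Fix a ∈ [1,3] and r ∈ (0,1/16]. There is a constant C > 0 (depending only on a and r) such that the following holds. Let coefficient functions a_k : {−1,1}^k → [1,a] (with a_0 ≡ 1) be given, let n ≥ 1, and suppose there is c_n ∈ ℝ with c_n ≤ g_n(x) ≤ c_n + 2^{−n}(ln a)/2 for all x ∈ K_n. Then for every x₀ ∈ K_n and every y ∈ ℝ² with |y − x₀| = r^{n−1}/2 one has | g̃_n(y) − c_n − 2^{−n} ln(r^{n−1}/2) | ≤ C 2^{−n}, where g̃_n(y) = 2^{−n} Σ_{ε ∈ 𝓔_n} ln|y − f_n(ε)|. -/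

import Mathlib

/-!
Split off the term of `x₀` from `g̃_n(y)`: what remains of `g̃_n(y) − g_n(x₀)` is
`2^{−n} Σ_{x ≠ x₀} (ln |y − x| − ln |x − x₀|)`. If `x` first differs from `x₀` in the letter
`k`, the leading term of `x − x₀` dominates the geometric tail, so `|x − x₀| ≥ (4/5) r^k`;
since `|y − x₀| = r^{n−1}/2`, the summand of `x` is `O(r^{n−1−k})`. At most `2^{n−1−k}` words
first differ from `x₀` in the letter `k`, so the sum is bounded by a geometric series in `2r`,
while the hypothesis on `g_n` gives `|g_n(x₀) − c_n| ≤ 2^{−n}`.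
-/

noncomputable section

/-- The sign `±1 : ℝ` associated to a boolean letter. -/
def sgn (b : Bool) : ℝ := if b then 1 else -1

/-- `f_n(ε) = Σ_{k=1}^{n} (a_{k−1}(ε)/2) r^{k−1} ε_k` (0-based: sum over `k < n`). -/
def fN (r : ℝ) (A : ℕ → (ℕ → Bool) → ℝ) (n : ℕ) (ε : ℕ → Bool) : ℝ :=
  ∑ k ∈ Finset.range n, A k ε / 2 * r ^ k * sgn (ε k)

/-- A word of length `n` (element of `𝓔_n`), extended to an infinite word by `false`. -/
def extWord (n : ℕ) (σ : Fin n → Bool) : ℕ → Bool :=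
  fun k => if h : k < n then σ ⟨k, h⟩ else false

/-- `g_n(x) = 2^{−n} Σ_{x' ∈ K_n, x' ≠ x} ln |x' − x|`, written on the parameter space `𝓔_n`. -/
def gN (r : ℝ) (A : ℕ → (ℕ → Bool) → ℝ) (n : ℕ) (σ : Fin n → Bool) : ℝ :=
  (2 : ℝ)⁻¹ ^ n *
    ∑ σ' ∈ Finset.univ.erase σ, Real.log |fN r A n (extWord n σ') - fN r A n (extWord n σ)|

/-- `g̃_n(y) = 2^{−n} Σ_{x ∈ K_n} ln |y − x|` for `y ∈ ℝ²`, where `ℝ²` is identified with `ℂ`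
and `K_n ⊂ ℝ = ℝ×{0} ⊂ ℂ`. -/
def gTilde (r : ℝ) (A : ℕ → (ℕ → Bool) → ℝ) (n : ℕ) (y : ℂ) : ℝ :=
  (2 : ℝ)⁻¹ ^ n * ∑ σ : Fin n → Bool, Real.log ‖y - (fN r A n (extWord n σ) : ℂ)‖

open Finset PiNat Real

lemma extWord_of_lt {n k : ℕ} (σ : Fin n → Bool) (h : k < n) : extWord n σ k = σ ⟨k, h⟩ :=
  dif_pos h

lemma extWord_of_le {n k : ℕ} (σ : Fin n → Bool) (h : n ≤ k) : extWord n σ k = false :=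
  dif_neg (by omega)

lemma extWord_injective (n : ℕ) : Function.Injective (extWord n) := fun σ τ h =>
  funext fun i => by simpa [extWord_of_lt _ i.isLt] using congrFun h i

lemma firstDiff_extWord_lt {n : ℕ} {σ τ : Fin n → Bool} (h : σ ≠ τ) :
    firstDiff (extWord n σ) (extWord n τ) < n := by
  by_contra! hle
  exact apply_firstDiff_ne ((extWord_injective n).ne h) (by
    rw [extWord_of_le σ hle, extWord_of_le τ hle])

lemma card_filter_forall_lt_eq_le {β : Type*} [Fintype β] [DecidableEq β] {n : ℕ}
    (τ : Fin n → β) (m : ℕ) :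
    #{σ : Fin n → β | ∀ j : Fin n, j.val < m → σ j = τ j} ≤ Fintype.card β ^ (n - m) := by
  calc _ ≤ #(univ : Finset (Fin (n - m) → β)) := by
        refine card_le_card_of_injOn (fun σ i => σ ⟨m + i, by omega⟩)
          (fun _ _ => mem_coe.2 (mem_univ _)) fun σ₁ h₁ σ₂ h₂ heq => funext fun j => ?_
        simp only [coe_filter, mem_univ, true_and, Set.mem_ofPred_eq] at h₁ h₂
        by_cases hj : j.val < m
        · rw [h₁ j hj, h₂ j hj]
        · simpa [show m + (j - m) = j by omega] using congrFun heq ⟨j - m, by omega⟩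
    _ = _ := by simp

lemma card_filter_firstDiff_eq_le {n : ℕ} (σ₀ : Fin n → Bool) (k : ℕ) :
    #{σ ∈ univ.erase σ₀ | firstDiff (extWord n σ) (extWord n σ₀) = k} ≤ 2 ^ (n - 1 - k) := by
  -- such a word agrees with `σ₀` before `k` and with its negation at `k`
  let τ : Fin n → Bool := fun j => if j.val = k then !σ₀ j else σ₀ j
  calc _ ≤ #{σ : Fin n → Bool | ∀ j : Fin n, j.val < k + 1 → σ j = τ j} := by
        refine card_le_card fun σ hσ => ?_
        obtain ⟨hne, hk⟩ := mem_filter.1 hσ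
        replace hne := ne_of_mem_erase hne
        refine mem_filter.2 ⟨mem_univ _, fun j hj => ?_⟩
        rcases Nat.lt_succ_iff_lt_or_eq.1 hj with hj | hj
        · have := apply_eq_of_lt_firstDiff (hk ▸ hj : j.val < _)
          simpa [τ, hj.ne, extWord_of_lt _ j.isLt] using this
        · subst hj
          have := apply_firstDiff_ne ((extWord_injective n).ne hne)
          rw [hk, extWord_of_lt _ j.isLt, extWord_of_lt _ j.isLt] at this
          simpa [τ] using Bool.eq_not.2 this
    _ ≤ 2 ^ (n - (k + 1)) := by simpa using card_filter_forall_lt_eq_le τ (k + 1)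
    _ = 2 ^ (n - 1 - k) := by rw [Nat.sub_sub, add_comm]

lemma sum_erase_pow_firstDiff_le {q : ℝ} (hq0 : 0 ≤ q) (hq : 2 * q < 1) {n : ℕ}
    (σ₀ : Fin n → Bool) :
    ∑ σ ∈ univ.erase σ₀, q ^ (n - 1 - firstDiff (extWord n σ) (extWord n σ₀))
      ≤ 1 / (1 - 2 * q) := by
  calc _ = ∑ k ∈ range n, ∑ σ ∈ univ.erase σ₀ with
          firstDiff (extWord n σ) (extWord n σ₀) = k, q ^ (n - 1 - k) := by
        rw [← sum_fiberwise_of_maps_to fun σ hσ =>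
          mem_range.2 (firstDiff_extWord_lt (ne_of_mem_erase hσ))]
        exact sum_congr rfl fun k _ => sum_congr rfl fun σ hσ => by rw [(mem_filter.1 hσ).2]
    _ ≤ ∑ k ∈ range n, (2 * q) ^ (n - 1 - k) := by
        refine sum_le_sum fun k _ => ?_
        rw [sum_const, nsmul_eq_mul, mul_pow]
        gcongr
        exact_mod_cast card_filter_firstDiff_eq_le σ₀ k
    _ = ∑ m ∈ Ico 0 n, (2 * q) ^ m := by
        rw [← range_eq_Ico, sum_range_reflect (fun m => (2 * q) ^ m) n]
    _ ≤ (2 * q) ^ 0 / (1 - 2 * q) := geom_sum_Ico_le_of_lt_one (by positivity) hq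
    _ = _ := by rw [pow_zero]

lemma abs_sgn (b : Bool) : |sgn b| = 1 := by cases b <;> simp [sgn]

lemma abs_sgn_sub_sgn_of_ne {b b' : Bool} (h : b ≠ b') : |sgn b - sgn b'| = 2 := by
  revert h
  cases b <;> cases b' <;> norm_num [sgn]

lemma abs_log_sub_log_le {u v m : ℝ} (hm : 0 < m) (hu : m ≤ u) (hv : m ≤ v) :
    |log u - log v| ≤ |u - v| / m := by
  have key : ∀ u v, m ≤ u → m ≤ v → log u - log v ≤ |u - v| / m := fun u v hu hv => by
    have hu0 : 0 < u := hm.trans_le hu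
    have hv0 : 0 < v := hm.trans_le hv
    calc log u - log v = log (u / v) := (log_div hu0.ne' hv0.ne').symm
      _ ≤ u / v - 1 := log_le_sub_one_of_pos (div_pos hu0 hv0)
      _ = (u - v) / v := by field_simp
      _ ≤ |u - v| / m := div_le_div₀ (abs_nonneg _) (le_abs_self _) hm hv
  exact abs_sub_le_iff.2 ⟨key u v hu hv, abs_sub_comm u v ▸ key v u hv hu⟩

lemma mul_pow_firstDiff_le_abs_fN_sub_fN {a r : ℝ} (ha3 : a ≤ 3) (hr0 : 0 < r) (hr1 : r ≤ 1 / 16)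
    {A : ℕ → (ℕ → Bool) → ℝ} (hA : ∀ k ε, 1 ≤ A k ε ∧ A k ε ≤ a)
    (hAc : ∀ k ε ε', (∀ j < k, ε j = ε' j) → A k ε = A k ε') {n : ℕ} {e e₀ : ℕ → Bool}
    (hne : e ≠ e₀) (hn : firstDiff e e₀ < n) :
    4 / 5 * r ^ firstDiff e e₀ ≤ |fN r A n e - fN r A n e₀| := by
  set k := firstDiff e e₀
  set t : ℕ → ℝ := fun j => A j e / 2 * r ^ j * sgn (e j) - A j e₀ / 2 * r ^ j * sgn (e₀ j)
  have hAk : ∀ j ≤ k, A j e = A j e₀ := fun j hj =>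
    hAc j e e₀ fun i hi => apply_eq_of_lt_firstDiff (by omega)
  have hsplit : fN r A n e - fN r A n e₀ = t k + ∑ j ∈ Ico (k + 1) n, t j := by
    have hlow : ∑ j ∈ range k, t j = 0 := sum_eq_zero fun j hj => by
      have hj := mem_range.1 hj
      simp only [t, hAk j hj.le, apply_eq_of_lt_firstDiff hj, sub_self]
    rw [fN, fN, ← sum_sub_distrib, ← sum_range_add_sum_Ico _ hn.le, hlow, zero_add,
      sum_eq_sum_Ico_succ_bot hn]
  have hlead : r ^ k ≤ |t k| := by
    have ht : t k = A k e / 2 * r ^ k * (sgn (e k) - sgn (e₀ k)) := by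
      simp only [t, hAk k le_rfl]; ring
    have hAk1 := (hA k e).1
    rw [ht, abs_mul, abs_sgn_sub_sgn_of_ne (apply_firstDiff_ne hne), abs_of_nonneg (by positivity)]
    nlinarith [pow_pos hr0 k]
  have hterm : ∀ j, |t j| ≤ a * r ^ j := fun j => by
    have hb : ∀ ε : ℕ → Bool, |A j ε / 2 * r ^ j * sgn (ε j)| ≤ a / 2 * r ^ j := fun ε => by
      have hAj := hA j ε
      rw [abs_mul, abs_sgn, mul_one,
        abs_of_nonneg (mul_nonneg (by linarith [hAj.1]) (pow_nonneg hr0.le j))]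
      gcongr
      exact hAj.2
    linarith [abs_sub (A j e / 2 * r ^ j * sgn (e j)) (A j e₀ / 2 * r ^ j * sgn (e₀ j)),
      hb e, hb e₀]
  have htail : |∑ j ∈ Ico (k + 1) n, t j| ≤ 1 / 5 * r ^ k := by
    have hr : r / (1 - r) ≤ 1 / 15 := by rw [div_le_iff₀ (by linarith)]; linarith
    calc |∑ j ∈ Ico (k + 1) n, t j| ≤ ∑ j ∈ Ico (k + 1) n, a * r ^ j :=
          (abs_sum_le_sum_abs _ _).trans (sum_le_sum fun j _ => hterm j)
      _ ≤ a * (r ^ (k + 1) / (1 - r)) := by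
          rw [← mul_sum]
          gcongr
          · linarith [(hA 0 e).1, (hA 0 e).2]
          · exact geom_sum_Ico_le_of_lt_one hr0.le (by linarith)
      _ = a * r ^ k * (r / (1 - r)) := by rw [pow_succ]; ring
      _ ≤ 3 * r ^ k * (1 / 15) := by gcongr; exact div_nonneg hr0.le (by linarith)
      _ = 1 / 5 * r ^ k := by ring
  have hrev := abs_sub (t k + ∑ j ∈ Ico (k + 1) n, t j) (∑ j ∈ Ico (k + 1) n, t j)
  rw [add_sub_cancel_right] at hrev
  rw [hsplit]
  linarith

lemma abs_log_norm_sub_sub_log_abs_sub_le {a r : ℝ} (ha3 : a ≤ 3) (hr0 : 0 < r)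
    (hr1 : r ≤ 1 / 16) {A : ℕ → (ℕ → Bool) → ℝ} (hA : ∀ k ε, 1 ≤ A k ε ∧ A k ε ≤ a)
    (hAc : ∀ k ε ε', (∀ j < k, ε j = ε' j) → A k ε = A k ε') {n : ℕ} {σ σ₀ : Fin n → Bool}
    {y : ℂ} (hy : ‖y - (fN r A n (extWord n σ₀) : ℂ)‖ = r ^ (n - 1) / 2) (hσ : σ ≠ σ₀) :
    |log ‖y - (fN r A n (extWord n σ) : ℂ)‖ -
        log (|fN r A n (extWord n σ) - fN r A n (extWord n σ₀)|)|
      ≤ 5 / 3 * r ^ (n - 1 - firstDiff (extWord n σ) (extWord n σ₀)) := by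
  set k := firstDiff (extWord n σ) (extWord n σ₀)
  set x := fN r A n (extWord n σ)
  set x₀ := fN r A n (extWord n σ₀)
  have hk : k < n := firstDiff_extWord_lt hσ
  have hsep : 4 / 5 * r ^ k ≤ |x - x₀| :=
    mul_pow_firstDiff_le_abs_fN_sub_fN ha3 hr0 hr1 hA hAc ((extWord_injective n).ne hσ) hk
  have hclose : |‖y - x‖ - (|x - x₀|)| ≤ r ^ (n - 1) / 2 := by
    have h := abs_norm_sub_norm_le (y - x) ((x₀ : ℂ) - x)
    rwa [sub_sub_sub_cancel_right, hy, ← Complex.ofReal_sub, Complex.norm_real, Real.norm_eq_abs,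
      abs_sub_comm x₀] at h
  have hpow : r ^ (n - 1) = r ^ k * r ^ (n - 1 - k) := by rw [← pow_add]; congr 1; omega
  have hsmall : r ^ (n - 1) / 2 ≤ 1 / 2 * r ^ k := by
    have := pow_le_pow_of_le_one hr0.le (by linarith) (show k ≤ n - 1 by omega)
    linarith
  have hfar : 3 / 10 * r ^ k ≤ ‖y - x‖ := by linarith [(abs_le.1 hclose).1]
  calc _ ≤ |‖y - x‖ - (|x - x₀|)| / (3 / 10 * r ^ k) :=
        abs_log_sub_log_le (by positivity) hfar (by linarith [pow_pos hr0 k])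
    _ ≤ r ^ (n - 1) / 2 / (3 / 10 * r ^ k) := by gcongr
    _ = 5 / 3 * r ^ (n - 1 - k) := by rw [hpow]; field_simp; ring

lemma abs_sum_log_norm_sub_sub_log_abs_sub_le_two {a r : ℝ} (ha3 : a ≤ 3) (hr0 : 0 < r)
    (hr1 : r ≤ 1 / 16) {A : ℕ → (ℕ → Bool) → ℝ} (hA : ∀ k ε, 1 ≤ A k ε ∧ A k ε ≤ a)
    (hAc : ∀ k ε ε', (∀ j < k, ε j = ε' j) → A k ε = A k ε') {n : ℕ} {σ₀ : Fin n → Bool}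
    {y : ℂ} (hy : ‖y - (fN r A n (extWord n σ₀) : ℂ)‖ = r ^ (n - 1) / 2) :
    |∑ σ ∈ univ.erase σ₀, (log ‖y - (fN r A n (extWord n σ) : ℂ)‖ -
        log |fN r A n (extWord n σ) - fN r A n (extWord n σ₀)|)| ≤ 2 := by
  calc _ ≤ ∑ σ ∈ univ.erase σ₀, 5 / 3 * r ^ (n - 1 - firstDiff (extWord n σ) (extWord n σ₀)) :=
        (abs_sum_le_sum_abs _ _).trans <| sum_le_sum fun σ hσ =>
          abs_log_norm_sub_sub_log_abs_sub_le ha3 hr0 hr1 hA hAc hy (ne_of_mem_erase hσ)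
    _ ≤ 5 / 3 * (1 / (1 - 2 * r)) := by
        rw [← mul_sum]
        gcongr
        exact sum_erase_pow_firstDiff_le hr0.le (by linarith) σ₀
    _ ≤ 2 := by rw [mul_one_div, div_le_iff₀ (by linarith)]; linarith

lemma gTilde_sub_gN (r : ℝ) (A : ℕ → (ℕ → Bool) → ℝ) (n : ℕ) (y : ℂ) (σ₀ : Fin n → Bool) :
    gTilde r A n y - gN r A n σ₀ = (2 : ℝ)⁻¹ ^ n * log ‖y - (fN r A n (extWord n σ₀) : ℂ)‖ +
      (2 : ℝ)⁻¹ ^ n * ∑ σ ∈ univ.erase σ₀, (log ‖y - (fN r A n (extWord n σ) : ℂ)‖ -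
        log |fN r A n (extWord n σ) - fN r A n (extWord n σ₀)|) := by
  rw [gTilde, gN, ← add_sum_erase _ _ (mem_univ σ₀), sum_sub_distrib]
  ring

/-- Fix `a ∈ [1,3]` and `r ∈ (0,1/16]`. There is `C > 0` (depending only on
`a, r`) such that for any admissible coefficients, any `n ≥ 1`, if
`c_n ≤ g_n ≤ c_n + 2^{−n}(ln a)/2` on `K_n`, then for every `x₀ ∈ K_n` and `y ∈ ℝ²` with
`|y − x₀| = r^{n−1}/2` one has `| g̃_n(y) − c_n − 2^{−n} ln(r^{n−1}/2) | ≤ C 2^{−n}`. -/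
theorem stmt6 (a r : ℝ) (ha1 : 1 ≤ a) (ha3 : a ≤ 3) (hr0 : 0 < r) (hr1 : r ≤ 1 / 16) :
    ∃ C : ℝ, 0 < C ∧
      ∀ A : ℕ → (ℕ → Bool) → ℝ,
        (∀ ε, A 0 ε = 1) →
        (∀ k ε, 1 ≤ A k ε ∧ A k ε ≤ a) →
        (∀ k ε ε', (∀ j < k, ε j = ε' j) → A k ε = A k ε') →
      ∀ n : ℕ, 1 ≤ n →
      ∀ c : ℝ,
        (∀ σ : Fin n → Bool,
          c ≤ gN r A n σ ∧ gN r A n σ ≤ c + (2 : ℝ)⁻¹ ^ n * (Real.log a / 2)) →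
      ∀ σ₀ : Fin n → Bool, ∀ y : ℂ,
        ‖y - (fN r A n (extWord n σ₀) : ℂ)‖ = r ^ (n - 1) / 2 →
        |gTilde r A n y - c - (2 : ℝ)⁻¹ ^ n * Real.log (r ^ (n - 1) / 2)|
          ≤ C * (2 : ℝ)⁻¹ ^ n := by
  refine ⟨3, by norm_num, fun A _ hA hAc n _ c hc σ₀ y hy => ?_⟩
  have h2n : (0 : ℝ) < 2⁻¹ ^ n := by positivity
  have hlog_a : log a ≤ 2 := by linarith [log_le_sub_one_of_pos (by linarith : 0 < a)]
  have hgN : |gN r A n σ₀ - c| ≤ 2⁻¹ ^ n := by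
    obtain ⟨hlo, hhi⟩ := hc σ₀
    rw [abs_le]
    constructor <;> nlinarith
  set S := ∑ σ ∈ univ.erase σ₀, (log ‖y - (fN r A n (extWord n σ) : ℂ)‖ -
    log |fN r A n (extWord n σ) - fN r A n (extWord n σ₀)|)
  have hS : |2⁻¹ ^ n * S| ≤ 2⁻¹ ^ n * 2 := by
    rw [abs_mul, abs_of_pos h2n]
    gcongr
    exact abs_sum_log_norm_sub_sub_log_abs_sub_le_two ha3 hr0 hr1 hA hAc hy
  have hsplit := gTilde_sub_gN r A n y σ₀
  rw [hy] at hsplit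
  calc _ = |2⁻¹ ^ n * S + (gN r A n σ₀ - c)| := by congr 1; linarith
    _ ≤ 2⁻¹ ^ n * 2 + 2⁻¹ ^ n := (abs_add_le _ _).trans (add_le_add hS hgN)
    _ = 3 * 2⁻¹ ^ n := by ring
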